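/- (Erdős–Szekeres cups-caps theorem) For all integers m, n ≥ 3, every finite set P ⊆ ℝ² with pairwise distinct x-coordinates, no 3 collinear points, and |P| ≥ binom(m+n−4, n−2) + 1 contains an m-cup or an n-cap. -/

import Mathlib

/-!
Induction on `m + n`; the bound already holds for `m, n ≥ 2`, where any two points form both
a 2-cup and a 2-cap. For `m, n ≥ 3` let `T ⊆ P` be the set of last points of `(m-1)`-cups.
`P \ T` contains no `(m-1)`-cup, so if it has more than `binom(m+n-5, n-2)` points it
contains an `n`-cap. Otherwise, by Pascal's rule, `T` has more than `binom(m+n-5, n-3)` points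
and so contains an `m`-cup or an `(n-1)`-cap. Such a cap starts at the end `q` of an
`(m-1)`-cup; if `p` precedes `q` on the cup and `r` follows it on the cap, then `p q r` turns
one way or the other, so either `r` extends the cup or `p` extends the cap.
-/

open Finset

noncomputable section

abbrev Pt : Type := ℝ × ℝ

/-- `P` contains `l` collinear points. -/
def HasCollinear (l : ℕ) (P : Finset Pt) : Prop :=
  ∃ S : Finset Pt, S ⊆ P ∧ S.card = l ∧ Collinear ℝ (S : Set Pt)

/-- `X` is in convex position: no point of `X` lies in the convex hull of the others. -/
def ConvexPos (X : Finset Pt) : Prop :=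
  ∀ x ∈ X, x ∉ convexHull ℝ ((X.erase x : Finset Pt) : Set Pt)

/-- `p 0, …, p (k-1)` have strictly increasing x-coordinates and each `p (i+1)` lies
strictly below the line through `p i` and `p (i+2)` (a `k`-cup). -/
def IsCupSeq {k : ℕ} (p : Fin k → Pt) : Prop :=
  (∀ i j : Fin k, i < j → (p i).1 < (p j).1) ∧
  ∀ i : ℕ, ∀ h : i + 2 < k,
    ((p ⟨i + 1, by omega⟩).2 - (p ⟨i, by omega⟩).2) * ((p ⟨i + 2, h⟩).1 - (p ⟨i, by omega⟩).1)
      < ((p ⟨i + 2, h⟩).2 - (p ⟨i, by omega⟩).2) * ((p ⟨i + 1, by omega⟩).1 - (p ⟨i, by omega⟩).1)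

/-- `p 0, …, p (k-1)` have strictly increasing x-coordinates and each `p (i+1)` lies
strictly above the line through `p i` and `p (i+2)` (a `k`-cap). -/
def IsCapSeq {k : ℕ} (p : Fin k → Pt) : Prop :=
  (∀ i j : Fin k, i < j → (p i).1 < (p j).1) ∧
  ∀ i : ℕ, ∀ h : i + 2 < k,
    ((p ⟨i + 1, by omega⟩).2 - (p ⟨i, by omega⟩).2) * ((p ⟨i + 2, h⟩).1 - (p ⟨i, by omega⟩).1)
      > ((p ⟨i + 2, h⟩).2 - (p ⟨i, by omega⟩).2) * ((p ⟨i + 1, by omega⟩).1 - (p ⟨i, by omega⟩).1)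

/-- `P` contains a `k`-cup. -/
def HasCup (k : ℕ) (P : Finset Pt) : Prop :=
  ∃ p : Fin k → Pt, (∀ i, p i ∈ P) ∧ IsCupSeq p

/-- `P` contains a `k`-cap. -/
def HasCap (k : ℕ) (P : Finset Pt) : Prop :=
  ∃ p : Fin k → Pt, (∀ i, p i ∈ P) ∧ IsCapSeq p

/-- The points of `P` have pairwise distinct x-coordinates. -/
def DistinctX (P : Finset Pt) : Prop :=
  Set.InjOn Prod.fst (P : Set Pt)

/-- There is an affine line (given by the equation `a*x + b*y = c`) strictly
separating `A` from `B`. -/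
def SepLine (A B : Set Pt) : Prop :=
  ∃ a b c : ℝ, (a, b) ≠ ((0 : ℝ), (0 : ℝ)) ∧ (∀ x ∈ A, a * x.1 + b * x.2 < c) ∧
    (∀ y ∈ B, c < a * y.1 + b * y.2)

/-- `P` avoids `K`: the line through any two distinct points of `P` is disjoint from `K`. -/
def Avoids (P : Finset Pt) (K : Set Pt) : Prop :=
  ∀ p ∈ P, ∀ q ∈ P, p ≠ q → ∀ x ∈ K, x ∉ affineSpan ℝ ({p, q} : Set Pt)

/-- `X` is an inner-cap with respect to `K`. -/
def InnerCap (K : Set Pt) (X : Finset Pt) : Prop :=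
  ∀ x ∈ X, SepLine {x} (convexHull ℝ (((X.erase x : Finset Pt) : Set Pt) ∪ K))

/-- `X` is an outer-cup with respect to `K`. -/
def OuterCup (K : Set Pt) (X : Finset Pt) : Prop :=
  ∀ x ∈ X, SepLine (convexHull ℝ ({x} ∪ K)) ((X.erase x : Finset Pt) : Set Pt)

/-- The line `L` crosses the cell `Δ`: it meets `Δ` but does not contain it. -/
def Crosses (L Δ : Set Pt) : Prop := (L ∩ Δ).Nonempty ∧ ¬ Δ ⊆ L

/-- Twice the signed area of the triangle `p q r`, with the sign chosen so that, when
`p.1 < q.1 < r.1`, it is negative iff `q` lies below the line `p r`. -/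
def cross (p q r : Pt) : ℝ := (q.2 - p.2) * (r.1 - p.1) - (r.2 - p.2) * (q.1 - p.1)

/-- On `f 0, …, f (k-1)`: a `k`-cup for `R = (· < 0)`, a `k`-cap for `R = (0 < ·)`. -/
def TurnChain (R : ℝ → Prop) (k : ℕ) (f : ℕ → Pt) : Prop :=
  (∀ i, i + 1 < k → (f i).1 < (f (i + 1)).1) ∧
  ∀ i, i + 2 < k → R (cross (f i) (f (i + 1)) (f (i + 2)))

lemma exists_fin_iff_exists_turnChain (R : ℝ → Prop) (k : ℕ) (P : Finset Pt) :
    (∃ p : Fin k → Pt, (∀ i, p i ∈ P) ∧ (∀ i j : Fin k, i < j → (p i).1 < (p j).1) ∧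
      ∀ i : ℕ, ∀ h : i + 2 < k,
        R (cross (p ⟨i, by omega⟩) (p ⟨i + 1, by omega⟩) (p ⟨i + 2, h⟩))) ↔
    ∃ f : ℕ → Pt, (∀ i < k, f i ∈ P) ∧ TurnChain R k f := by
  constructor
  · rintro ⟨p, hpP, hmono, hturn⟩
    refine ⟨fun i => if h : i < k then p ⟨i, h⟩ else 0, fun i hi => by simp [hi, hpP],
      fun i hi => ?_, fun i hi => ?_⟩
    · simpa [show i < k by omega, hi] using hmono ⟨i, by omega⟩ ⟨i + 1, hi⟩ (by simp)
    · simpa [show i < k by omega, show i + 1 < k by omega, hi] using hturn i hi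
  · rintro ⟨f, hfP, hmono, hturn⟩
    have hmono' : StrictMonoOn (fun i => (f i).1) (Set.Iio k) :=
      strictMonoOn_of_lt_add_one Set.ordConnected_Iio fun i _ _ hi => hmono i hi
    exact ⟨fun i => f i, fun i => hfP i i.2, fun i j hij => hmono' i.2 j.2 hij,
      fun i hi => hturn i hi⟩

lemma hasCup_iff {k : ℕ} {P : Finset Pt} :
    HasCup k P ↔ ∃ f : ℕ → Pt, (∀ i < k, f i ∈ P) ∧ TurnChain (· < 0) k f := by
  rw [← exists_fin_iff_exists_turnChain]
  simp only [HasCup, IsCupSeq, cross, sub_neg]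

lemma hasCap_iff {k : ℕ} {P : Finset Pt} :
    HasCap k P ↔ ∃ f : ℕ → Pt, (∀ i < k, f i ∈ P) ∧ TurnChain (0 < ·) k f := by
  rw [← exists_fin_iff_exists_turnChain]
  simp only [HasCap, IsCapSeq, cross, sub_pos, gt_iff_lt]

lemma HasCup.mono {k : ℕ} {P Q : Finset Pt} (h : Q ⊆ P) : HasCup k Q → HasCup k P :=
  fun ⟨p, hp, hs⟩ => ⟨p, fun i => h (hp i), hs⟩

lemma HasCap.mono {k : ℕ} {P Q : Finset Pt} (h : Q ⊆ P) : HasCap k Q → HasCap k P :=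
  fun ⟨p, hp, hs⟩ => ⟨p, fun i => h (hp i), hs⟩

lemma HasCollinear.mono {l : ℕ} {P Q : Finset Pt} (h : Q ⊆ P) :
    HasCollinear l Q → HasCollinear l P :=
  fun ⟨S, hS, hc, hl⟩ => ⟨S, hS.trans h, hc, hl⟩

lemma DistinctX.mono {P Q : Finset Pt} (h : Q ⊆ P) (hX : DistinctX P) : DistinctX Q :=
  Set.InjOn.mono (by exact_mod_cast h) hX

lemma collinear_of_cross_eq_zero {p q r : Pt} (hpr : p.1 ≠ r.1) (h : cross p q r = 0) :
    Collinear ℝ ({p, q, r} : Set Pt) := by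
  rw [collinear_iff_of_mem (Set.mem_insert p _)]
  refine ⟨r - p, ?_⟩
  have hr : r.1 - p.1 ≠ 0 := sub_ne_zero.mpr hpr.symm
  rintro x (rfl | rfl | rfl)
  · exact ⟨0, by simp⟩
  · refine ⟨(x.1 - p.1) / (r.1 - p.1), Prod.ext ?_ ?_⟩
    · simp [field]
    · simp only [cross] at h
      simp [field]
      linarith
  · exact ⟨1, by simp⟩

lemma cross_ne_zero_of_not_hasCollinear {P : Finset Pt} (hC : ¬ HasCollinear 3 P) {p q r : Pt}
    (hp : p ∈ P) (hq : q ∈ P) (hr : r ∈ P) (hpq : p.1 < q.1) (hqr : q.1 < r.1) :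
    cross p q r ≠ 0 := by
  intro h
  refine hC ⟨{p, q, r}, by simp [insert_subset_iff, hp, hq, hr], ?_, ?_⟩
  · have hne : ∀ {a b : Pt}, a.1 < b.1 → a ≠ b := fun hab heq => hab.ne (congrArg _ heq)
    rw [card_insert_of_notMem (by simp [hne hpq, hne (hpq.trans hqr)]),
      card_insert_of_notMem (by simp [hne hqr]), card_singleton]
  · push_cast
    exact collinear_of_cross_eq_zero (hpq.trans hqr).ne h

lemma exists_turnChain_two (R : ℝ → Prop) {P : Finset Pt} (hX : DistinctX P)
    (hP : 1 < P.card) : ∃ f : ℕ → Pt, (∀ i < 2, f i ∈ P) ∧ TurnChain R 2 f := by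
  obtain ⟨p, hp, q, hq, hpq⟩ := one_lt_card.mp hP
  have hx : p.1 ≠ q.1 := fun h => hpq (hX hp hq h)
  wlog hlt : p.1 < q.1 generalizing p q
  · exact this q hq p hp hpq.symm hx.symm (hx.lt_or_gt.resolve_left hlt)
  refine ⟨fun i => if i = 0 then p else q, fun i hi => ?_, fun i hi => ?_, fun i hi => by omega⟩
  · interval_cases i <;> simpa
  · obtain rfl : i = 0 := by omega
    simpa

namespace TurnChain

variable {R : ℝ → Prop} {k : ℕ} {f : ℕ → Pt}

lemma snoc (hf : TurnChain R (k + 2) f) {z : Pt} (hx : (f (k + 1)).1 < z.1)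
    (hz : R (cross (f k) (f (k + 1)) z)) : TurnChain R (k + 3) (Function.update f (k + 2) z) := by
  refine ⟨fun i hi => ?_, fun i hi => ?_⟩
  · rcases (show i + 1 < k + 2 ∨ i = k + 1 by omega) with hi | rfl
    · simpa [Function.update_apply, show i ≠ k + 2 by omega, show i ≠ k + 1 by omega]
        using hf.1 i hi
    · simpa using hx
  · rcases (show i + 2 < k + 2 ∨ i = k by omega) with hi | rfl
    · simpa [Function.update_apply, show i ≠ k + 2 by omega, show i ≠ k + 1 by omega,
        show i ≠ k by omega] using hf.2 i hi
    · simpa using hz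

lemma cons (hf : TurnChain R (k + 2) f) {z : Pt} (hx : z.1 < (f 0).1)
    (hz : R (cross z (f 0) (f 1))) :
    TurnChain R (k + 3) (fun i => if i = 0 then z else f (i - 1)) := by
  refine ⟨fun i hi => ?_, fun i hi => ?_⟩
  · rcases i with _ | i
    · simpa using hx
    · simpa using hf.1 i (by omega)
  · rcases i with _ | i
    · simpa using hz
    · simpa using hf.2 i (by omega)

end TurnChain

def IsCupEnd (k : ℕ) (P : Finset Pt) (q : Pt) : Prop :=
  ∃ f : ℕ → Pt, (∀ i < k + 1, f i ∈ P) ∧ TurnChain (· < 0) (k + 1) f ∧ f k = q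

lemma not_hasCup_filter_not_isCupEnd {k : ℕ} {P : Finset Pt} [DecidablePred (IsCupEnd k P)] :
    ¬ HasCup (k + 1) (P.filter fun q => ¬ IsCupEnd k P q) := by
  rw [hasCup_iff]
  rintro ⟨f, hfS, hf⟩
  have hend := mem_filter.mp (hfS k (by omega))
  exact hend.2 ⟨f, fun i hi => (mem_filter.mp (hfS i hi)).1, hf, rfl⟩

lemma hasCup_or_hasCap_of_hasCap_filter_isCupEnd {k l : ℕ} {P : Finset Pt}
    [DecidablePred (IsCupEnd (k + 1) P)] (hC : ¬ HasCollinear 3 P)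
    (h : HasCap (l + 2) (P.filter (IsCupEnd (k + 1) P))) :
    HasCup (k + 3) P ∨ HasCap (l + 3) P := by
  obtain ⟨c, hcT, hc⟩ := hasCap_iff.mp h
  have hcP : ∀ i < l + 2, c i ∈ P := fun i hi => (mem_filter.mp (hcT i hi)).1
  obtain ⟨f, hfP, hf, hfc⟩ := (mem_filter.mp (hcT 0 (by omega))).2
  have hx₁ : (f k).1 < (c 0).1 := hfc ▸ hf.1 k (by omega)
  have hx₂ : (c 0).1 < (c 1).1 := hc.1 0 (by omega)
  have hturn := cross_ne_zero_of_not_hasCollinear hC (hfP k (by omega)) (hcP 0 (by omega))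
    (hcP 1 (by omega)) hx₁ hx₂
  rcases hturn.lt_or_gt with hturn | hturn
  · refine Or.inl (hasCup_iff.mpr ⟨_, fun i hi => ?_, hf.snoc (hfc ▸ hx₂) (hfc ▸ hturn)⟩)
    rcases (show i < k + 2 ∨ i = k + 2 by omega) with hi | rfl
    · simpa [Function.update_apply, show i ≠ k + 2 by omega] using hfP i hi
    · simpa using hcP 1 (by omega)
  · refine Or.inr (hasCap_iff.mpr ⟨_, fun i hi => ?_, hc.cons hx₁ hturn⟩)
    rcases i with _ | i
    · simpa using hfP k (by omega)
    · simpa using hcP i (by omega)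

theorem hasCup_or_hasCap :
    ∀ (a b : ℕ) {P : Finset Pt}, DistinctX P → ¬ HasCollinear 3 P →
      (a + b).choose b < P.card → HasCup (a + 2) P ∨ HasCap (b + 2) P
  | 0, b, P, hX, _, hP => by
    obtain ⟨f, hfP, hf⟩ := exists_turnChain_two (· < 0) hX (by simpa using hP)
    exact Or.inl (hasCup_iff.mpr ⟨f, hfP, hf⟩)
  | a + 1, 0, P, hX, _, hP => by
    obtain ⟨f, hfP, hf⟩ := exists_turnChain_two (0 < ·) hX (by simpa using hP)
    exact Or.inr (hasCap_iff.mpr ⟨f, hfP, hf⟩)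
  | a + 1, b + 1, P, hX, hC, hP => by
    classical
    set T := P.filter (IsCupEnd (a + 1) P)
    set S := P.filter fun q => ¬ IsCupEnd (a + 1) P q
    have hTP : T ⊆ P := filter_subset _ _
    have hSP : S ⊆ P := filter_subset _ _
    have hsplit : (a + (b + 1)).choose (b + 1) < S.card ∨ (a + 1 + b).choose b < T.card := by
      have hcard : T.card + S.card = P.card := card_filter_add_card_filter_not _
      have pascal := Nat.choose_succ_succ' (a + b + 1) b
      rw [show a + b + 1 + 1 = a + 1 + (b + 1) by omega] at pascal
      rw [show a + (b + 1) = a + b + 1 by omega, show a + 1 + b = a + b + 1 by omega]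
      omega
    rcases hsplit with hS | hT
    · rcases hasCup_or_hasCap a (b + 1) (hX.mono hSP) (mt (HasCollinear.mono hSP) hC) hS
        with hcup | hcap
      · exact absurd hcup not_hasCup_filter_not_isCupEnd
      · exact Or.inr (hcap.mono hSP)
    · rcases hasCup_or_hasCap (a + 1) b (hX.mono hTP) (mt (HasCollinear.mono hTP) hC) hT
        with hcup | hcap
      · exact Or.inl (hcup.mono hTP)
      · exact hasCup_or_hasCap_of_hasCap_filter_isCupEnd hC hcap

/-- **Erdős–Szekeres cups–caps theorem.** For all `m, n ≥ 3`, every finite planar point set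
with pairwise distinct x-coordinates, no 3 collinear points and at least
`binom(m+n−4, n−2) + 1` points contains an `m`-cup or an `n`-cap. -/
theorem stmt12 :
    ∀ m n : ℕ, 3 ≤ m → 3 ≤ n → ∀ P : Finset Pt,
      DistinctX P → ¬ HasCollinear 3 P →
      (m + n - 4).choose (n - 2) + 1 ≤ P.card →
      HasCup m P ∨ HasCap n P := by
  intro m n hm hn P hX hC hP
  obtain ⟨a, rfl⟩ : ∃ a, m = a + 2 := ⟨m - 2, by omega⟩
  obtain ⟨b, rfl⟩ : ∃ b, n = b + 2 := ⟨n - 2, by omega⟩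
  rw [show a + 2 + (b + 2) - 4 = a + b by omega, Nat.add_sub_cancel] at hP
  exact hasCup_or_hasCap a b hX hC hP

end
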